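/- Let f : ℝ → ℂ be integrable (f ∈ L¹(ℝ)). Then for every real ξ, the limit as ε → 0+ of (𝔉₊(ξ + iε) − 𝔉₋(ξ − iε)) exists and equals the classical Fourier transform ∫_{−∞}^{∞} f(x)·exp(−2πi ξ x) dx, where 𝔉₊(ζ) = ∫_{−∞}^{0} f(x)e^{−2πiζx} dx for Im ζ > 0 and 𝔉₋(ζ) = −∫_{0}^{∞} f(x)e^{−2πiζx} dx for Im ζ < 0. -/

import Mathlib

/-!
On the line `ξ + iε` the kernel factors as `e^{-2πiξx} · e^{2πεx}`, and on the half-line where each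
boundary value is integrated the damping factor `e^{±2πεx}` lies in `(0, 1]` and tends to `1`.
Dominated convergence (with dominant `|f|`) thus gives the limit of each half, and the two halves
add up to the classical Fourier integral.
-/

open Filter MeasureTheory Real Complex Topology

theorem tendsto_integral_exp_mul_smul_of_nonpos {α E : Type*} [MeasurableSpace α]
    [NormedAddCommGroup E] [NormedSpace ℝ E] {μ : Measure α} {g : α → E} (hg : Integrable g μ)
    {ψ : α → ℝ} (hψm : Measurable ψ) (hψ : ∀ᵐ x ∂μ, ψ x ≤ 0) :
    Tendsto (fun t : ℝ => ∫ x, Real.exp (t * ψ x) • g x ∂μ) (𝓝[>] 0) (𝓝 (∫ x, g x ∂μ)) := by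
  have hlim : ∀ x, Tendsto (fun t : ℝ => Real.exp (t * ψ x) • g x) (𝓝[>] 0) (𝓝 (g x)) := by
    intro x
    have hcont : Continuous (fun t : ℝ => Real.exp (t * ψ x) • g x) := by fun_prop
    simpa using (hcont.tendsto 0).mono_left nhdsWithin_le_nhds
  refine tendsto_integral_filter_of_dominated_convergence (fun x => ‖g x‖) ?_ ?_ hg.norm
    (ae_of_all _ hlim)
  · exact Eventually.of_forall fun t =>
      (by fun_prop : Measurable fun x => Real.exp (t * ψ x)).aestronglyMeasurable.smul
        hg.aestronglyMeasurable
  · filter_upwards [self_mem_nhdsWithin] with t (ht : 0 < t)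
    filter_upwards [hψ] with x hx
    rw [norm_smul, norm_of_nonneg (exp_pos _).le]
    exact mul_le_of_le_one_left (norm_nonneg _)
      (exp_le_one_iff.mpr (mul_nonpos_of_nonneg_of_nonpos ht.le hx))

theorem cexp_fourier_kernel_add_I_mul (ξ η x : ℝ) :
    cexp (-2 * π * I * (ξ + I * η) * x) =
      Real.exp (η * (2 * π * x)) • cexp (-2 * π * I * ξ * x) := by
  rw [Complex.real_smul, ofReal_exp, ← Complex.exp_add]
  congr 1
  push_cast
  linear_combination (-2 * π * η * x : ℂ) * I_sq

theorem integrable_mul_cexp_fourier_kernel {f : ℝ → ℂ} (hf : Integrable f) (ξ : ℝ) :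
    Integrable (fun x : ℝ => f x * cexp (-2 * π * I * ξ * x)) := by
  refine hf.mul_bdd (c := 1) (by fun_prop) (ae_of_all _ fun x => ?_)
  have : -2 * π * I * ξ * x = ((-2 * π * ξ * x : ℝ) : ℂ) * I := by push_cast; ring
  rw [this, norm_exp_ofReal_mul_I]

theorem hyperfunction_fourier_eq_classical_of_integrable
    (f : ℝ → ℂ) (hf : Integrable f) (ξ : ℝ) :
    Tendsto (fun ε : ℝ =>
        (∫ x in Set.Iic (0 : ℝ),
            f x * Complex.exp (-2 * (π : ℂ) * Complex.I * ((ξ : ℂ) + Complex.I * ε) * x)) -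
        (-∫ x in Set.Ici (0 : ℝ),
            f x * Complex.exp (-2 * (π : ℂ) * Complex.I * ((ξ : ℂ) - Complex.I * ε) * x)))
      (nhdsWithin 0 (Set.Ioi 0))
      (nhds (∫ x : ℝ, f x * Complex.exp (-2 * (π : ℂ) * Complex.I * (ξ : ℂ) * x))) := by
  have hF := integrable_mul_cexp_fourier_kernel hf ξ
  have hleft := tendsto_integral_exp_mul_smul_of_nonpos hF.integrableOn (ψ := fun x => 2 * π * x)
    (by fun_prop) <| (ae_restrict_mem measurableSet_Iic).mono fun x (hx : x ≤ 0) => by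
      nlinarith [pi_pos]
  have hright := tendsto_integral_exp_mul_smul_of_nonpos (hF.integrableOn (s := Set.Ici 0))
    (ψ := fun x => -(2 * π * x)) (by fun_prop) <|
      (ae_restrict_mem measurableSet_Ici).mono fun x (hx : 0 ≤ x) => by nlinarith [pi_pos]
  rw [← intervalIntegral.integral_Iic_add_Ioi hF.integrableOn hF.integrableOn,
    ← integral_Ici_eq_integral_Ioi]
  refine (hleft.add hright).congr fun ε => ?_
  simp_rw [sub_neg_eq_add, sub_eq_add_neg _ (I * _), ← mul_neg, ← ofReal_neg,
    cexp_fourier_kernel_add_I_mul, mul_smul_comm, neg_mul, mul_neg]
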